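/- Every spherical triangle on the unit sphere whose three angles are rational multiples of π has all three side lengths transcendental. -/
import Mathlib
open Real Complex Polynomial

lemma algQ : ∀ q : ℚ, IsAlgebraic ℚ ((q:ℂ)) := fun q => isAlgebraic_rat ℚ q

lemma algAdd {x y : ℂ} (hx : IsAlgebraic ℚ x) (hy : IsAlgebraic ℚ y) : IsAlgebraic ℚ (x + y) := by
  rw [isAlgebraic_iff_isIntegral] at *; exact hx.add hy

lemma algMul {x y : ℂ} (hx : IsAlgebraic ℚ x) (hy : IsAlgebraic ℚ y) : IsAlgebraic ℚ (x * y) := by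
  rw [isAlgebraic_iff_isIntegral] at *; exact hx.mul hy

lemma algNeg {x : ℂ} (hx : IsAlgebraic ℚ x) : IsAlgebraic ℚ (-x) := by
  rw [isAlgebraic_iff_isIntegral] at *; exact hx.neg

lemma algDiv {x y : ℂ} (hx : IsAlgebraic ℚ x) (hy : IsAlgebraic ℚ y) : IsAlgebraic ℚ (x / y) := by
  rcases eq_or_ne y 0 with h | h
  · simp [h, isAlgebraic_zero]
  · rw [div_eq_mul_inv]; exact algMul hx (hy.inv)

lemma algI : IsAlgebraic ℚ (Complex.I) := by
  refine ⟨X^2 + 1, ?_, by simp⟩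
  intro h
  have := congrArg (fun p => Polynomial.coeff p 0) h
  simp at this

lemma exp_ratpi_alg (q : ℚ) : IsAlgebraic ℚ (Complex.exp ((q:ℂ) * π * Complex.I)) := by
  refine ⟨X ^ (2 * q.den) - Polynomial.C 1, X_pow_sub_C_ne_zero (by positivity) 1, ?_⟩
  simp only [map_sub, map_pow, aeval_X, map_one]
  rw [← Complex.exp_nat_mul]
  rw [sub_eq_zero]
  have hden : ((q.den : ℂ)) * (q : ℂ) = (q.num : ℂ) := by
    rw [Rat.cast_def, mul_comm, div_mul_cancel₀]
    exact_mod_cast (Nat.cast_ne_zero (R := ℂ)).2 q.den_nz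
  calc Complex.exp ((2 * q.den : ℕ) * ((q:ℂ) * π * Complex.I))
      = Complex.exp ((q.num : ℂ) * (2 * π * Complex.I)) := by
        push_cast
        rw [show ((2:ℂ) * q.den) * ((q:ℂ) * π * Complex.I) = ((q.den:ℂ) * q) * (2 * π * Complex.I) by ring, hden]
    _ = 1 := Complex.exp_int_mul_two_pi_mul_I q.num

lemma cos_ratpi_alg (q : ℚ) : IsAlgebraic ℚ ((Real.cos ((q:ℝ) * π) : ℂ)) := by
  have h1 : ((Real.cos ((q:ℝ) * π) : ℂ)) = Complex.cos ((q:ℂ) * π) := by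
    rw [Complex.ofReal_cos]; push_cast; ring_nf
  rw [h1, Complex.cos]
  have he := exp_ratpi_alg q
  have hne : Complex.exp (-((q:ℂ) * π * Complex.I)) = (Complex.exp ((q:ℂ) * π * Complex.I))⁻¹ := by
    rw [← Complex.exp_neg]
  have h3 : IsAlgebraic ℚ (Complex.exp ((q:ℂ)*π*Complex.I) + Complex.exp (-((q:ℂ)*π*Complex.I))) := by
    rw [hne]; exact algAdd he he.inv
  have h2 : (Complex.exp ((q:ℂ)*π*Complex.I) + Complex.exp (-((q:ℂ)*π*Complex.I))) / 2 =
      (Complex.exp ((q:ℂ)*π*Complex.I) + Complex.exp (-((q:ℂ)*π*Complex.I))) / ((2:ℚ):ℂ) := by norm_num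
  have h4 := algDiv h3 (algQ 2)
  rw [← h2] at h4
  convert h4 using 2 <;> ring

lemma sin_ratpi_alg (q : ℚ) : IsAlgebraic ℚ ((Real.sin ((q:ℝ) * π) : ℂ)) := by
  have h1 : ((Real.sin ((q:ℝ) * π) : ℂ)) = Complex.sin ((q:ℂ) * π) := by
    rw [Complex.ofReal_sin]; push_cast; ring_nf
  rw [h1, Complex.sin]
  have he := exp_ratpi_alg q
  have hne : Complex.exp (-((q:ℂ) * π * Complex.I)) = (Complex.exp ((q:ℂ) * π * Complex.I))⁻¹ := by
    rw [← Complex.exp_neg]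
  have hs : IsAlgebraic ℚ (Complex.exp (-((q:ℂ)*π*Complex.I)) - Complex.exp ((q:ℂ)*π*Complex.I)) := by
    rw [hne, sub_eq_add_neg]; exact algAdd he.inv (algNeg he)
  have h4 := algMul (algMul hs algI) ((algQ 2).inv)
  convert h4 using 1
  rw [div_eq_mul_inv]
  norm_num

lemma side_trans
    (lindemann : ∀ (n : ℕ) (α c : Fin n → ℂ), Function.Injective α →
      (∀ i, IsAlgebraic ℚ (α i)) → (∀ i, IsAlgebraic ℚ (c i)) →
      (∑ i, c i * Complex.exp (α i)) = 0 → ∀ i, c i = 0)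
    (x : ℝ) (hx : 0 < x) (hcos : IsAlgebraic ℚ ((Real.cos x : ℂ))) :
    Transcendental ℚ x := by
  intro halg
  have halgC : IsAlgebraic ℚ ((x : ℂ)) :=
    halg.algHom ((Complex.ofRealAm).restrictScalars ℚ)
  have hxne : (x:ℂ) ≠ 0 := by exact_mod_cast hx.ne'
  have hxi : (x:ℂ) * Complex.I ≠ 0 := mul_ne_zero hxne Complex.I_ne_zero
  have hinj : Function.Injective (![(x:ℂ) * Complex.I, -((x:ℂ) * Complex.I), 0] : Fin 3 → ℂ) := by
    intro i j h
    fin_cases i <;> fin_cases j <;> simp at h ⊢ <;>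
      first
      | rfl
      | (exfalso; apply hxi
         first
         | (have h2 : (2:ℂ) * ((x:ℂ) * Complex.I) = 0 := by linear_combination h
            simpa using h2)
         | (have h2 : (2:ℂ) * ((x:ℂ) * Complex.I) = 0 := by linear_combination -h
            simpa using h2)
         | exact h
         | exact h.symm
         | (rcases h with h | h
            · exact h
            · simpa using h)
         | simpa using h)
  have halgs : ∀ i, IsAlgebraic ℚ ((![(x:ℂ) * Complex.I, -((x:ℂ) * Complex.I), 0] : Fin 3 → ℂ) i) := by
    intro i
    fin_cases i
    · exact algMul halgC algI
    · exact algNeg (algMul halgC algI)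
    · exact isAlgebraic_zero
  have hcs : ∀ i, IsAlgebraic ℚ ((![1, 1, -2 * (Real.cos x : ℂ)] : Fin 3 → ℂ) i) := by
    intro i
    fin_cases i
    · exact isAlgebraic_one
    · exact isAlgebraic_one
    · show IsAlgebraic ℚ (-2 * (Real.cos x : ℂ))
      have h5 := algNeg (algMul (algQ 2) hcos)
      convert h5 using 1
      push_cast; ring
  have hsum : (∑ i, (![1, 1, -2 * (Real.cos x : ℂ)] : Fin 3 → ℂ) i *
      Complex.exp ((![(x:ℂ) * Complex.I, -((x:ℂ) * Complex.I), 0] : Fin 3 → ℂ) i)) = 0 := by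
    simp only [Fin.sum_univ_three, Matrix.cons_val_zero, Matrix.cons_val_one, Matrix.head_cons,
      Matrix.cons_val_two, Matrix.tail_cons]
    have hcc : ((Real.cos x : ℂ)) = Complex.cos (x:ℂ) := by rw [Complex.ofReal_cos]
    rw [hcc, Complex.cos, Complex.exp_zero]
    ring
  have h0 := lindemann 3 _ _ hinj halgs hcs hsum 0
  simp at h0

theorem spherical_triangle_rational_angles_transcendental_sides
    (lindemann : ∀ (n : ℕ) (α c : Fin n → ℂ), Function.Injective α →
      (∀ i, IsAlgebraic ℚ (α i)) → (∀ i, IsAlgebraic ℚ (c i)) →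
      (∑ i, c i * Complex.exp (α i)) = 0 → ∀ i, c i = 0)
    (α β γ a b c : ℝ)
    (ha : a ∈ Set.Ioo 0 π) (hb : b ∈ Set.Ioo 0 π) (hc : c ∈ Set.Ioo 0 π)
    (hslc2c : Real.cos c = (Real.cos α * Real.cos β + Real.cos γ) / (Real.sin α * Real.sin β))
    (hslc2a : Real.cos a = (Real.cos β * Real.cos γ + Real.cos α) / (Real.sin β * Real.sin γ))
    (hslc2b : Real.cos b = (Real.cos γ * Real.cos α + Real.cos β) / (Real.sin γ * Real.sin α))
    (hαQ : ∃ q : ℚ, α = (q : ℝ) * π) (hβQ : ∃ q : ℚ, β = (q : ℝ) * π)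
    (hγQ : ∃ q : ℚ, γ = (q : ℝ) * π) :
    Transcendental ℚ a ∧ Transcendental ℚ b ∧ Transcendental ℚ c := by
  obtain ⟨qα, rfl⟩ := hαQ
  obtain ⟨qβ, rfl⟩ := hβQ
  obtain ⟨qγ, rfl⟩ := hγQ
  have hca := cos_ratpi_alg qα
  have hcb := cos_ratpi_alg qβ
  have hcg := cos_ratpi_alg qγ
  have hsa := sin_ratpi_alg qα
  have hsb := sin_ratpi_alg qβ
  have hsg := sin_ratpi_alg qγ
  have key : ∀ (x : ℝ), x ∈ Set.Ioo 0 π →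
      ∀ (u v w s t : ℝ), Real.cos x = (u * v + w) / (s * t) →
      IsAlgebraic ℚ ((u:ℂ)) → IsAlgebraic ℚ ((v:ℂ)) → IsAlgebraic ℚ ((w:ℂ)) →
      IsAlgebraic ℚ ((s:ℂ)) → IsAlgebraic ℚ ((t:ℂ)) → Transcendental ℚ x := by
    intro x hx u v w s t heq hu hv hw hs ht
    apply side_trans lindemann x hx.1
    have hcast : ((Real.cos x : ℝ) : ℂ) = ((u:ℂ) * v + w) / ((s:ℂ) * t) := by
      rw [heq]; push_cast; ring
    rw [hcast]
    exact algDiv (algAdd (algMul hu hv) hw) (algMul hs ht)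
  exact ⟨key a ha _ _ _ _ _ hslc2a hcb hcg hca hsb hsg,
    key b hb _ _ _ _ _ hslc2b hcg hca hcb hsg hsa,
    key c hc _ _ _ _ _ hslc2c hca hcb hcg hsa hsb⟩
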